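/- In Λ_τ([0,1)) with τ=1+√2 and τ'=1−√2, if x∈Λ and y is the smallest element of Λ strictly greater than x, then y−x ∈ {τ, 1+τ}. -/

import Mathlib

noncomputable def σ : ℝ := 1 + Real.sqrt 2
noncomputable def σ' : ℝ := 1 - Real.sqrt 2

noncomputable def Λ : Set ℝ :=
  {x : ℝ | ∃ a b : ℤ, x = a + b * σ ∧ ((a : ℝ) + b * σ') ∈ Set.Ico 0 1}

/-!
A point of `Λ` is `a + bσ` whose conjugate `a + bσ'` lies in `[0, 1)`, so the difference `u` of
two points of `Λ` is some `p + qσ` whose conjugate lies in `(-1, 1)`. From any `x ∈ Λ`, one of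
`x + σ`, `x + (1 + σ)` is again in `Λ` (shifting the conjugate by `σ' ∈ (-1, 0)` or by
`1 + σ' ∈ (0, 1)`), so the gap after `x` is at most `1 + σ`. Finally `u - u' = 2q√2` with
`0 < u ≤ 1 + σ` and `|u'| < 1` forces `q = 1`, and then `|p + σ'| < 1` forces `p ∈ {0, 1}`.
-/

lemma σ'_neg : σ' < 0 := by
  simp only [σ']
  linarith [Real.one_lt_sqrt_two]

lemma neg_one_lt_σ' : -1 < σ' := by
  simp only [σ']
  linarith [Real.sqrt_two_lt_three_halves]

lemma sub_conj_eq (p q : ℤ) : ((p : ℝ) + q * σ) - (p + q * σ') = 2 * q * √2 := by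
  simp only [σ, σ']
  ring

lemma exists_mem_Λ_mem_Ioc {x : ℝ} (hx : x ∈ Λ) : ∃ z ∈ Λ, z ∈ Set.Ioc x (x + (1 + σ)) := by
  obtain ⟨a, b, rfl, h0, h1⟩ := hx
  have hσ : 0 < σ := by simp only [σ]; positivity
  by_cases h : -σ' ≤ a + b * σ'
  · refine ⟨a + (b + 1) * σ, ⟨a, b + 1, by push_cast; ring, ?_, ?_⟩, ?_, ?_⟩
    all_goals push_cast; linarith [σ'_neg]
  · refine ⟨(a + 1) + (b + 1) * σ, ⟨a + 1, b + 1, by push_cast; ring, ?_, ?_⟩, ?_, ?_⟩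
    all_goals push_cast; linarith [neg_one_lt_σ']

lemma exists_sub_eq_of_mem_Λ {x y : ℝ} (hx : x ∈ Λ) (hy : y ∈ Λ) :
    ∃ p q : ℤ, y - x = p + q * σ ∧ |(p : ℝ) + q * σ'| < 1 := by
  obtain ⟨a, b, rfl, hx0, hx1⟩ := hx
  obtain ⟨c, d, rfl, hy0, hy1⟩ := hy
  refine ⟨c - a, d - b, by push_cast; ring, abs_lt.2 ⟨?_, ?_⟩⟩
  all_goals push_cast; linarith

lemma eq_one_of_abs_conj_lt_one {p q : ℤ} (hpos : 0 < (p : ℝ) + q * σ)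
    (hle : (p : ℝ) + q * σ ≤ 1 + σ) (hconj : |(p : ℝ) + q * σ'| < 1) : q = 1 := by
  obtain ⟨hc0, hc1⟩ := abs_lt.1 hconj
  have hdiff := sub_conj_eq p q
  have hσ : σ = 1 + √2 := rfl
  have hq_ne_zero : q ≠ 0 := by
    rintro rfl
    have h0 : (0 : ℝ) < p := by simpa using hpos
    have h1 : (p : ℝ) < 1 := by simpa using hc1
    have : 0 < p := by exact_mod_cast h0
    have : p < 1 := by exact_mod_cast h1
    omega
  have hq_gt : -1 < q := by
    by_contra! hq
    have : (q : ℝ) ≤ -1 := by exact_mod_cast hq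
    nlinarith [Real.one_lt_sqrt_two]
  have hq_lt : q < 2 := by
    by_contra! hq
    have : (2 : ℝ) ≤ q := by exact_mod_cast hq
    nlinarith [Real.sqrt_two_lt_three_halves, Real.one_lt_sqrt_two]
  omega

lemma eq_σ_or_eq_one_add_σ_of_abs_conj_lt_one {p q : ℤ} (hpos : 0 < (p : ℝ) + q * σ)
    (hle : (p : ℝ) + q * σ ≤ 1 + σ) (hconj : |(p : ℝ) + q * σ'| < 1) :
    (p : ℝ) + q * σ = σ ∨ (p : ℝ) + q * σ = 1 + σ := by
  obtain rfl := eq_one_of_abs_conj_lt_one hpos hle hconj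
  obtain ⟨hc0, hc1⟩ := abs_lt.1 hconj
  have hp0 : -1 < p := by
    have : (-1 : ℝ) < p := by push_cast at hc0; linarith [σ'_neg]
    exact_mod_cast this
  have hp1 : p < 2 := by
    have : (p : ℝ) < 2 := by push_cast at hc1; linarith [neg_one_lt_σ']
    exact_mod_cast this
  interval_cases p <;> simp

/-- In `Λ_τ([0,1))` with `τ = 1 + √2`, the gap from a point to the next point
is either `τ` or `1 + τ`. -/
theorem gaps_two_values (x y : ℝ) (hx : x ∈ Λ) (hy : y ∈ Λ) (hxy : x < y)
    (hmin : ∀ z ∈ Λ, x < z → y ≤ z) :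
    y - x = σ ∨ y - x = 1 + σ := by
  obtain ⟨z, hz, hxz, hzx⟩ := exists_mem_Λ_mem_Ioc hx
  obtain ⟨p, q, hpq, hconj⟩ := exists_sub_eq_of_mem_Λ hx hy
  have hgap_le : y - x ≤ 1 + σ := by linarith [hmin z hz hxz]
  rw [hpq] at hgap_le ⊢
  exact eq_σ_or_eq_one_add_σ_of_abs_conj_lt_one (hpq ▸ sub_pos.2 hxy) hgap_le hconj
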